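/- arXiv:2311.03055 — 5 statements merged into one kernel-verified Lean document; each statement's English description precedes it below -/
import Mathlib

section
/- Let X be a measurable space, μ⁺ and μ⁻ probability measures on X, and f : X → ℝ a measurable function with 0 ≤ f(x) ≤ 1 for all x. Define H(a,b,α) = ∫(f(x)−a)² dμ⁺(x) + ∫(f(x)−b)² dμ⁻(x) + 2(1+α)(∫f dμ⁻ − ∫f dμ⁺) − α². Then the square-loss pairwise AUC risk admits the instance-wise minimax reformulation: infimum over (a,b) ∈ ℝ² of the supremum over α ∈ ℝ of H(a,b,α) equals ∫∫(1 − (f(x) − f(x')))² d(μ⁺⊗μ⁻)(x,x') − 1. -/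
open MeasureTheory

/-- The class-conditional instance-wise AUC objective
`H(a,b,α) = ∫(f−a)² dμ⁺ + ∫(f−b)² dμ⁻ + 2(1+α)(∫f dμ⁻ − ∫f dμ⁺) − α²`. -/
noncomputable def aucObjective {X : Type*} [MeasurableSpace X]
    (μp μn : Measure X) (f : X → ℝ) (a b α : ℝ) : ℝ :=
  (∫ x, (f x - a) ^ 2 ∂μp) + (∫ x, (f x - b) ^ 2 ∂μn)
    + 2 * (1 + α) * ((∫ x, f x ∂μn) - (∫ x, f x ∂μp)) - α ^ 2

section aux

variable {X : Type*} [MeasurableSpace X]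

lemma integrable_of_bounded' (μ : Measure X) [IsProbabilityMeasure μ]
    (g : X → ℝ) (hg : Measurable g) (C : ℝ) (h : ∀ x, |g x| ≤ C) :
    Integrable g μ :=
  (integrable_const C).mono' hg.aestronglyMeasurable
    (Filter.Eventually.of_forall (fun x => by simpa using h x))

lemma sq_shift_integral (μ : Measure X) [IsProbabilityMeasure μ]
    (f : X → ℝ) (hf : Measurable f) (hf0 : ∀ x, 0 ≤ f x) (hf1 : ∀ x, f x ≤ 1)
    (a : ℝ) :
    ∫ x, (f x - a) ^ 2 ∂μ
      = (∫ x, f x ^ 2 ∂μ) - 2 * a * (∫ x, f x ∂μ) + a ^ 2 := by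
  have hif : Integrable f μ :=
    integrable_of_bounded' μ f hf 1 (fun x => abs_le.2 ⟨by linarith [hf0 x], hf1 x⟩)
  have hif2 : Integrable (fun x => f x ^ 2) μ :=
    integrable_of_bounded' μ _ (hf.pow_const 2) 1
      (fun x => by rw [abs_of_nonneg (sq_nonneg _)]; nlinarith [hf0 x, hf1 x])
  have h1 : ∀ x, (f x - a) ^ 2 = (f x ^ 2 - (2 * a) * f x) + a ^ 2 := fun x => by ring
  simp only [h1]
  have hA : Integrable (fun x => f x ^ 2 - (2 * a) * f x) μ := by
    exact hif2.sub (hif.const_mul _)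
  rw [integral_add hA (integrable_const _),
    integral_sub hif2 (hif.const_mul _), integral_const_mul, integral_const]
  simp [measure_univ]

end aux

/-- The square-loss pairwise AUC risk admits the instance-wise minimax reformulation:
`inf_{(a,b) ∈ ℝ²} sup_{α ∈ ℝ} H(a,b,α) = ∫∫ (1 − (f(x) − f(x')))² d(μ⁺ ⊗ μ⁻) − 1`. -/
theorem auc_minimax_reformulation {X : Type*} [MeasurableSpace X]
    (μp μn : Measure X) [IsProbabilityMeasure μp] [IsProbabilityMeasure μn]
    (f : X → ℝ) (hf : Measurable f) (hf0 : ∀ x, 0 ≤ f x) (hf1 : ∀ x, f x ≤ 1) :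
    (⨅ ab : ℝ × ℝ, ⨆ α : ℝ, aucObjective μp μn f ab.1 ab.2 α)
      = (∫ q : X × X, (1 - (f q.1 - f q.2)) ^ 2 ∂(μp.prod μn)) - 1 := by
  set Mp := ∫ x, f x ∂μp with hMp
  set Mn := ∫ x, f x ∂μn with hMn
  set Sp := ∫ x, f x ^ 2 ∂μp with hSp
  set Sn := ∫ x, f x ^ 2 ∂μn with hSn
  have hifp : Integrable f μp :=
    integrable_of_bounded' μp f hf 1 (fun x => abs_le.2 ⟨by linarith [hf0 x], hf1 x⟩)
  have hifp2 : Integrable (fun x => f x ^ 2) μp :=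
    integrable_of_bounded' μp _ (hf.pow_const 2) 1
      (fun x => by rw [abs_of_nonneg (sq_nonneg _)]; nlinarith [hf0 x, hf1 x])
  set d := Mn - Mp with hd
  -- Step 1: compute the sup over α for each (a, b)
  have hsup : ∀ ab : ℝ × ℝ, (⨆ α : ℝ, aucObjective μp μn f ab.1 ab.2 α)
      = Sp - 2 * ab.1 * Mp + ab.1 ^ 2 + Sn - 2 * ab.2 * Mn + ab.2 ^ 2
        + 2 * d + d ^ 2 := by
    intro ab
    set C := Sp - 2 * ab.1 * Mp + ab.1 ^ 2 + Sn - 2 * ab.2 * Mn + ab.2 ^ 2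
        + 2 * d + d ^ 2 with hC
    have key : ∀ α : ℝ, aucObjective μp μn f ab.1 ab.2 α = C - (α - d) ^ 2 := by
      intro α
      rw [aucObjective, sq_shift_integral μp f hf hf0 hf1,
        sq_shift_integral μn f hf hf0 hf1]
      rw [hC, hd, hMp, hMn, hSp, hSn]
      ring
    apply le_antisymm
    · exact ciSup_le (fun α => by rw [key α]; nlinarith [sq_nonneg (α - d)])
    · have hb : BddAbove (Set.range (fun α => aucObjective μp μn f ab.1 ab.2 α)) := by
        refine ⟨C, ?_⟩
        rintro _ ⟨α, rfl⟩
        show aucObjective μp μn f ab.1 ab.2 α ≤ C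
        rw [key α]; nlinarith [sq_nonneg (α - d)]
      have := le_ciSup hb d
      rw [key d] at this
      simpa using this
  -- Step 2: compute the inf over (a,b)
  have hinf : (⨅ ab : ℝ × ℝ, ⨆ α : ℝ, aucObjective μp μn f ab.1 ab.2 α)
      = Sp - Mp ^ 2 + Sn - Mn ^ 2 + 2 * d + d ^ 2 := by
    apply le_antisymm
    · have hb : BddBelow (Set.range (fun ab : ℝ × ℝ =>
          ⨆ α : ℝ, aucObjective μp μn f ab.1 ab.2 α)) := by
        refine ⟨Sp - Mp ^ 2 + Sn - Mn ^ 2 + 2 * d + d ^ 2, ?_⟩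
        rintro _ ⟨ab, rfl⟩
        show Sp - Mp ^ 2 + Sn - Mn ^ 2 + 2 * d + d ^ 2
          ≤ ⨆ α : ℝ, aucObjective μp μn f ab.1 ab.2 α
        rw [hsup ab]
        nlinarith [sq_nonneg (ab.1 - Mp), sq_nonneg (ab.2 - Mn)]
      have := ciInf_le hb (Mp, Mn)
      rw [hsup (Mp, Mn)] at this
      calc (⨅ ab : ℝ × ℝ, ⨆ α : ℝ, aucObjective μp μn f ab.1 ab.2 α)
          ≤ _ := this
        _ = Sp - Mp ^ 2 + Sn - Mn ^ 2 + 2 * d + d ^ 2 := by ring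
    · apply le_ciInf
      intro ab
      rw [hsup ab]
      nlinarith [sq_nonneg (ab.1 - Mp), sq_nonneg (ab.2 - Mn)]
  -- Step 3: compute the product integral
  have hprodint : (∫ q : X × X, (1 - (f q.1 - f q.2)) ^ 2 ∂(μp.prod μn))
      = Sp + Sn - 2 * Mp * Mn + 2 * (Mn - Mp) + 1 := by
    have hFmeas : Measurable (fun q : X × X => (1 - (f q.1 - f q.2)) ^ 2) :=
      ((measurable_const.sub ((hf.comp measurable_fst).sub
        (hf.comp measurable_snd)))).pow_const 2
    have hFint : Integrable (fun q : X × X => (1 - (f q.1 - f q.2)) ^ 2) (μp.prod μn) := by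
      apply integrable_of_bounded' _ _ hFmeas 4
      intro q
      rw [abs_of_nonneg (sq_nonneg _)]
      nlinarith [hf0 q.1, hf1 q.1, hf0 q.2, hf1 q.2]
    rw [MeasureTheory.integral_prod _ hFint]
    have hinner : ∀ x : X, (∫ y, (1 - (f x - f y)) ^ 2 ∂μn)
        = Sn - 2 * (f x - 1) * Mn + (f x - 1) ^ 2 := by
      intro x
      have : ∀ y, (1 - (f x - f y)) ^ 2 = (f y - (f x - 1)) ^ 2 := fun y => by ring
      simp only [this]
      rw [sq_shift_integral μn f hf hf0 hf1]
    simp only [hinner]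
    have hexp : ∀ x : X, Sn - 2 * (f x - 1) * Mn + (f x - 1) ^ 2
        = (f x ^ 2 + (-2 * Mn - 2) * f x) + (Sn + 2 * Mn + 1) := fun x => by ring
    simp only [hexp]
    have hB : Integrable (fun x => f x ^ 2 + (-2 * Mn - 2) * f x) μp := by
      exact hifp2.add (hifp.const_mul _)
    rw [integral_add hB (integrable_const _),
      integral_add hifp2 (hifp.const_mul _), integral_const_mul, integral_const]
    simp [measure_univ, ← hMp, ← hSp]
    ring
  rw [hinf, hprodint, hd]
  ring
end

section
/- Let X be a measurable space, μ⁺ and μ⁻ probability measures on X, and f : X → ℝ measurable with 0 ≤ f ≤ 1. Define H(a,b,α) = ∫(f−a)² dμ⁺ + ∫(f−b)² dμ⁻ + 2(1+α)(∫f dμ⁻ − ∫f dμ⁺) − α². Set a⋆ = ∫f dμ⁺, b⋆ = ∫f dμ⁻ and α⋆ = b⋆ − a⋆. Then (a⋆,b⋆,α⋆) is a saddle point: for all a,b,α ∈ ℝ, H(a⋆,b⋆,α) ≤ H(a⋆,b⋆,α⋆) ≤ H(a,b,α⋆); consequently H(a⋆,b⋆,α⋆) equals the inf over (a,b) ∈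 ℝ² of the sup over α ∈ ℝ of H. -/
open MeasureTheory

lemma auc_integrable_aux {X : Type*} [MeasurableSpace X] (μ : Measure X)
    [IsProbabilityMeasure μ] (f : X → ℝ) (hf : Measurable f)
    (hf0 : ∀ x, 0 ≤ f x) (hf1 : ∀ x, f x ≤ 1) :
    Integrable f μ := by
  apply (integrable_const (1 : ℝ)).mono' hf.aestronglyMeasurable
  filter_upwards with x
  rw [Real.norm_eq_abs, abs_le]
  exact ⟨by linarith [hf0 x], by linarith [hf1 x]⟩

lemma auc_sq_integrable_aux {X : Type*} [MeasurableSpace X] (μ : Measure X)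
    [IsProbabilityMeasure μ] (f : X → ℝ) (hf : Measurable f)
    (hf0 : ∀ x, 0 ≤ f x) (hf1 : ∀ x, f x ≤ 1) :
    Integrable (fun x => (f x) ^ 2) μ := by
  apply (integrable_const (1 : ℝ)).mono' (hf.pow_const 2).aestronglyMeasurable
  filter_upwards with x
  rw [Real.norm_eq_abs, abs_le]
  constructor
  · nlinarith [hf0 x]
  · nlinarith [hf0 x, hf1 x]

lemma auc_integral_sq_expand {X : Type*} [MeasurableSpace X] (μ : Measure X)
    [IsProbabilityMeasure μ] (f : X → ℝ) (hf : Measurable f)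
    (hf0 : ∀ x, 0 ≤ f x) (hf1 : ∀ x, f x ≤ 1) (a : ℝ) :
    ∫ x, (f x - a) ^ 2 ∂μ
      = (∫ x, (f x) ^ 2 ∂μ) - 2 * a * (∫ x, f x ∂μ) + a ^ 2 := by
  have h1 := auc_integrable_aux μ f hf hf0 hf1
  have h2 := auc_sq_integrable_aux μ f hf hf0 hf1
  have hrw : ∀ x, (f x - a) ^ 2 = (f x) ^ 2 - (2 * a) * f x + a ^ 2 := by
    intro x; ring
  simp_rw [hrw]
  have hsub : Integrable (fun x => f x ^ 2 - 2 * a * f x) μ :=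
    h2.sub (h1.const_mul _)
  rw [integral_add hsub (integrable_const _),
    integral_sub h2 (h1.const_mul _), integral_const_mul, integral_const]
  simp

/-- With `a⋆ = ∫ f dμ⁺`, `b⋆ = ∫ f dμ⁻`, `α⋆ = b⋆ − a⋆`, the triple `(a⋆,b⋆,α⋆)` is a
saddle point of `H`, and its value is the min-max value of `H`. -/
theorem auc_optimal_auxiliary_variables {X : Type*} [MeasurableSpace X]
    (μp μn : Measure X) [IsProbabilityMeasure μp] [IsProbabilityMeasure μn]
    (f : X → ℝ) (hf : Measurable f) (hf0 : ∀ x, 0 ≤ f x) (hf1 : ∀ x, f x ≤ 1)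
    (astar bstar αstar : ℝ)
    (ha : astar = ∫ x, f x ∂μp) (hb : bstar = ∫ x, f x ∂μn)
    (hα : αstar = bstar - astar) :
    (∀ a b α : ℝ,
        aucObjective μp μn f astar bstar α ≤ aucObjective μp μn f astar bstar αstar ∧
        aucObjective μp μn f astar bstar αstar ≤ aucObjective μp μn f a b αstar) ∧
    aucObjective μp μn f astar bstar αstar
      = ⨅ ab : ℝ × ℝ, ⨆ α : ℝ, aucObjective μp μn f ab.1 ab.2 α := by
  set Ip := ∫ x, f x ∂μp with hIp
  set In := ∫ x, f x ∂μn with hIn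
  set Sp := ∫ x, (f x) ^ 2 ∂μp with hSp
  set Sn := ∫ x, (f x) ^ 2 ∂μn with hSn
  have hH : ∀ a b α : ℝ, aucObjective μp μn f a b α
      = (Sp - 2 * a * Ip + a ^ 2) + (Sn - 2 * b * In + b ^ 2)
        + 2 * (1 + α) * (In - Ip) - α ^ 2 := by
    intro a b α
    rw [aucObjective, auc_integral_sq_expand μp f hf hf0 hf1,
      auc_integral_sq_expand μn f hf hf0 hf1]
  -- key comparisons
  have hsup : ∀ a b α : ℝ,
      aucObjective μp μn f a b α ≤ aucObjective μp μn f a b αstar := by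
    intro a b α
    rw [hH, hH]
    have : αstar = In - Ip := by rw [hα, ha, hb]
    nlinarith [sq_nonneg (α - (In - Ip))]
  have hinf : ∀ a b : ℝ,
      aucObjective μp μn f astar bstar αstar ≤ aucObjective μp μn f a b αstar := by
    intro a b
    rw [hH, hH]
    nlinarith [sq_nonneg (a - Ip), sq_nonneg (b - In), ha, hb]
  refine ⟨fun a b α => ⟨hsup _ _ _, hinf _ _⟩, ?_⟩
  have hsupeq : ∀ ab : ℝ × ℝ,
      (⨆ α : ℝ, aucObjective μp μn f ab.1 ab.2 α)
        = aucObjective μp μn f ab.1 ab.2 αstar := by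
    intro ab
    apply le_antisymm
    · exact ciSup_le fun α => hsup _ _ _
    · refine le_ciSup ⟨aucObjective μp μn f ab.1 ab.2 αstar, ?_⟩ αstar
      rintro y ⟨α, rfl⟩
      exact hsup _ _ _
  rw [iInf_congr hsupeq]
  apply le_antisymm
  · exact le_ciInf fun ab => hinf _ _
  · refine ciInf_le ⟨aucObjective μp μn f astar bstar αstar, ?_⟩ (astar, bstar)
    rintro y ⟨ab, rfl⟩
    exact hinf _ _
end

section
/- Fix real numbers x⁺ and x⁻ with x⁻ ≤ x⁺, integers m, k ≥ 1, n = m + k, and p̂ = m/n. For vectors u ∈ ℝ^m and v ∈ ℝ^k define C(u,v) = (1/n)·(∑_{i=1}^m (x⁺ − u_i)² + ∑_{j=1}^k (x⁻ − v_j)²), and say (u,v) misranks if max_i u_i ≤ min_j v_j. Then the infimum of C(u,v) over all misranking perturbations (u,v) equals exactly p̂(1−p̂)(x⁺ − x⁻)². -/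
/-!
For each positive `i` and negative `j`, misranking forces `(x⁺ - u i) + (v j - x⁻) ≥ x⁺ - x⁻ ≥ 0`,
and the weighted inequality `m k (a + b)² ≤ (m + k)(m a² + k b²)` (the gap is `(m a - k b)²`)
summed over all `m k` pairs bounds the cost below by `m k (x⁺ - x⁻)² / n²`. Moving every point to
the barycenter `p̂ x⁺ + (1 - p̂) x⁻` attains this bound.
-/

open Finset

theorem mul_mul_sq_add_le (m k a b : ℝ) :
    m * k * (a + b) ^ 2 ≤ (m + k) * (m * a ^ 2 + k * b ^ 2) := by
  nlinarith [sq_nonneg (m * a - k * b)]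

theorem card_mul_card_mul_sq_le {ι κ : Type*} [Fintype ι] [Fintype κ] (a : ι → ℝ) (b : κ → ℝ)
    {d : ℝ} (hd : 0 ≤ d) (h : ∀ i j, d ≤ a i + b j) :
    (Fintype.card ι : ℝ) * Fintype.card κ * d ^ 2
      ≤ (Fintype.card ι + Fintype.card κ) * (∑ i, a i ^ 2 + ∑ j, b j ^ 2) := by
  set M : ℝ := (Fintype.card ι : ℝ)
  set K : ℝ := (Fintype.card κ : ℝ)
  have hpair : ∀ i j, M * K * d ^ 2 ≤ (M + K) * (M * a i ^ 2 + K * b j ^ 2) := fun i j =>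
    calc M * K * d ^ 2 ≤ M * K * (a i + b j) ^ 2 := by gcongr; exact h i j
      _ ≤ _ := mul_mul_sq_add_le M K (a i) (b j)
  have hsum : M * K * (M * K * d ^ 2) ≤ M * K * ((M + K) * (∑ i, a i ^ 2 + ∑ j, b j ^ 2)) := by
    have := sum_le_sum fun i (_ : i ∈ univ) => sum_le_sum fun j (_ : j ∈ univ) => hpair i j
    simp only [sum_const, card_univ, nsmul_eq_mul, sum_add_distrib, ← mul_sum] at this
    linarith
  rcases (by positivity : 0 ≤ M * K).eq_or_lt with hMK | hMK
  · rw [← hMK, zero_mul]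
    positivity
  · exact le_of_mul_le_mul_left hsum hMK

theorem neural_collapse_attack_exact_cost_general (xp xm : ℝ) (hx : xm ≤ xp)
    (m k : ℕ) (hm : 1 ≤ m) (n : ℕ) (hn : n = m + k)
    (phat : ℝ) (hp : phat = (m : ℝ) / (n : ℝ)) :
    sInf {c : ℝ | ∃ (u : Fin m → ℝ) (v : Fin k → ℝ),
        (∀ i j, u i ≤ v j) ∧
        c = (1 / (n : ℝ)) * ((∑ i, (xp - u i) ^ 2) + ∑ j, (xm - v j) ^ 2)}
      = phat * (1 - phat) * (xp - xm) ^ 2 := by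
  have hnR : (n : ℝ) = m + k := by exact_mod_cast hn
  have hn0 : (n : ℝ) ≠ 0 := by rw [hnR]; positivity
  refine IsLeast.csInf_eq ⟨?_, ?_⟩
  · refine ⟨fun _ => phat * xp + (1 - phat) * xm, fun _ => phat * xp + (1 - phat) * xm,
      fun _ _ => le_rfl, ?_⟩
    simp only [sum_const, card_univ, Fintype.card_fin, nsmul_eq_mul, hp]
    field_simp
    rw [hnR]
    ring
  · rintro _ ⟨u, v, huv, rfl⟩
    have hpairs := card_mul_card_mul_sq_le (fun i => xp - u i) (fun j => v j - xm)
      (sub_nonneg.2 hx) fun i j => by linarith [huv i j]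
    simp only [Fintype.card_fin, ← hnR] at hpairs
    have hswap : ∀ j, (xm - v j) ^ 2 = (v j - xm) ^ 2 := fun j => by ring
    calc phat * (1 - phat) * (xp - xm) ^ 2 = m * k * (xp - xm) ^ 2 / n ^ 2 := by
          rw [hp]; field_simp; rw [hnR]; ring
      _ ≤ n * (∑ i, (xp - u i) ^ 2 + ∑ j, (v j - xm) ^ 2) / n ^ 2 := by gcongr
      _ = _ := by simp only [hswap]; field_simp

/-- Proposition 2 (exact value): for collapsed positives at `x⁺` and negatives at `x⁻`,
the infimum of the average squared transport cost over all misranking perturbations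
equals exactly `p̂(1−p̂)(x⁺−x⁻)²`. -/
theorem neural_collapse_attack_exact_cost (xp xm : ℝ) (hx : xm ≤ xp)
    (m k : ℕ) (hm : 1 ≤ m) (hk : 1 ≤ k) (n : ℕ) (hn : n = m + k)
    (phat : ℝ) (hp : phat = (m : ℝ) / (n : ℝ)) :
    sInf {c : ℝ | ∃ (u : Fin m → ℝ) (v : Fin k → ℝ),
        (∀ i j, u i ≤ v j) ∧
        c = (1 / (n : ℝ)) * ((∑ i, (xp - u i) ^ 2) + ∑ j, (xm - v j) ^ 2)}
      = phat * (1 - phat) * (xp - xm) ^ 2 :=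
  neural_collapse_attack_exact_cost_general xp xm hx m k hm n hn phat hp
end

section
/- Fix real numbers x⁺, x⁻, integers m, k ≥ 1, n = m + k, and p̂ = m/n. Let u ∈ ℝ^m and v ∈ ℝ^k satisfy max_i u_i ≤ min_j v_j. Then there exist real numbers s and t with s ≤ t such that p̂·(x⁺ − s)² + (1−p̂)·(x⁻ − t)² ≤ (1/n)·(∑_{i=1}^m (x⁺ − u_i)² + ∑_{j=1}^k (x⁻ − v_j)²). -/
theorem exists_card_nsmul_le_sum {ι M : Type*} [Fintype ι] [Nonempty ι] [AddCommMonoid M]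
    [LinearOrder M] [IsOrderedAddMonoid M] (f : ι → M) :
    ∃ i, Fintype.card ι • f i ≤ ∑ j, f j := by
  obtain ⟨i, -, hi⟩ := Finset.exists_min_image Finset.univ f Finset.univ_nonempty
  exact ⟨i, Finset.card_nsmul_le_sum _ _ _ fun j _ => hi j (Finset.mem_univ j)⟩

/-- Step 3 of the proof of Proposition 2: any misranking perturbation is dominated in cost
by one moving all positives to a single point `s` and all negatives to a single point `t`
with `s ≤ t`. -/
theorem collapse_to_single_points (xp xm : ℝ) (m k : ℕ) (hm : 1 ≤ m) (hk : 1 ≤ k)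
    (n : ℕ) (hn : n = m + k) (phat : ℝ) (hp : phat = (m : ℝ) / (n : ℝ))
    (u : Fin m → ℝ) (v : Fin k → ℝ) (huv : ∀ i j, u i ≤ v j) :
    ∃ s t : ℝ, s ≤ t ∧
      phat * (xp - s) ^ 2 + (1 - phat) * (xm - t) ^ 2
        ≤ (1 / (n : ℝ)) * ((∑ i, (xp - u i) ^ 2) + ∑ j, (xm - v j) ^ 2) := by
  have : Nonempty (Fin m) := ⟨⟨0, hm⟩⟩
  have : Nonempty (Fin k) := ⟨⟨0, hk⟩⟩
  obtain ⟨i₀, hu⟩ := exists_card_nsmul_le_sum fun i => (xp - u i) ^ 2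
  obtain ⟨j₀, hv⟩ := exists_card_nsmul_le_sum fun j => (xm - v j) ^ 2
  simp only [Fintype.card_fin, nsmul_eq_mul] at hu hv
  refine ⟨u i₀, v j₀, huv i₀ j₀, ?_⟩
  have hn0 : (n : ℝ) ≠ 0 := by rw [hn]; positivity
  calc phat * (xp - u i₀) ^ 2 + (1 - phat) * (xm - v j₀) ^ 2
      = (1 / (n : ℝ)) * (m * (xp - u i₀) ^ 2 + k * (xm - v j₀) ^ 2) := by
        rw [hp, show (k : ℝ) = n - m by rw [hn]; push_cast; ring]
        field_simp
    _ ≤ _ := by gcongr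
end

section
/- Fix d ≥ 1 and points z₁,…,z_n ∈ ℝ^d, and let ℓ : ℝ^d → ℝ be continuous and bounded. For λ ≥ 0 define φ_λ(z) = sup_{z' ∈ ℝ^d} (ℓ(z') − λ‖z − z'‖²). Call a feasible perturbation a choice of finitely many points z'₁,…,z'_m ∈ ℝ^d together with a matrix Γ ∈ ℝ^{n×m} with Γ_{ij} ≥ 0 and ∑_{j=1}^m Γ_{ij} = 1/n for every i; its cost is ∑_{i,j} Γ_{ij}·‖z_i − z'_j‖² and its value is ∑_{i,j} Γ_{ij}·ℓ(z'_j). Then for every ε > 0, the supremum of the value over all feasible perturbations of cost at most ε equals the infimum over λ ≥ 0 of λ·ε + (1/n)·∑_{i=1}^n φ_λ(z_i). -/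
/-!
The worst-case value `P t` over plans of transport cost at most `t` is nondecreasing and concave
in `t`, since mixing two plans mixes their costs and values. Hence at `ε > 0` it has a supergradient
`λ ≥ 0`: `P t ≤ P ε + λ (t - ε)` for all `t ≥ 0`. Weak duality (`ℓ(z') ≤ φ_λ(z) + λ c(z, z')`,
integrated against a plan) bounds `P ε` by every dual value. Conversely, moving each `zᵢ` to a
point `wᵢ` gives a plan of cost `t = (1/n) ∑ c(zᵢ, wᵢ)`, so
`(1/n) ∑ (ℓ(wᵢ) - λ c(zᵢ, wᵢ)) ≤ P t - λ t ≤ P ε - λ ε`, and taking suprema over the `wᵢ` shows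
that the dual value at `λ` is at most `P ε`.
-/

open Set

theorem ConvexOn.exists_add_mul_sub_le {S : Set ℝ} {f : ℝ → ℝ} (hf : ConvexOn ℝ S f) {x : ℝ}
    (hx : x ∈ interior S) : ∃ r, ∀ y ∈ S, f x + r * (y - x) ≤ f y := by
  refine ⟨derivWithin f (Ioi x) x, fun y hy => ?_⟩
  rcases lt_trichotomy y x with hyx | rfl | hxy
  · have := (hf.slope_le_leftDeriv_of_mem_interior hy hx hyx).trans
      (hf.leftDeriv_le_rightDeriv_of_mem_interior hx)
    rw [slope_def_field, div_le_iff₀ (sub_pos.2 hyx)] at this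
    linarith
  · simp
  · have := hf.rightDeriv_le_slope_of_mem_interior hx hy hxy
    rw [slope_def_field, le_div_iff₀ (sub_pos.2 hxy)] at this
    linarith

theorem ConcaveOn.exists_nonneg_le_add_mul_sub {S : Set ℝ} {f : ℝ → ℝ} (hf : ConcaveOn ℝ S f)
    (hmono : MonotoneOn f S) {x : ℝ} (hx : x ∈ interior S) :
    ∃ r, 0 ≤ r ∧ ∀ y ∈ S, f y ≤ f x + r * (y - x) := by
  obtain ⟨r, hr⟩ := hf.neg.exists_add_mul_sub_le hx
  have hsupp : ∀ y ∈ S, f y ≤ f x + -r * (y - x) := fun y hy => by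
    have := hr y hy
    simp only [Pi.neg_apply] at this
    linarith
  obtain ⟨y, hxy, hy⟩ : ∃ y, x < y ∧ y ∈ S :=
    Filter.Eventually.exists_gt (mem_interior_iff_mem_nhds.mp hx)
  have hfxy := hmono (interior_subset hx) hy hxy.le
  refine ⟨-r, nonneg_of_mul_nonneg_right (a := y - x) ?_ (sub_pos.2 hxy), hsupp⟩
  linarith [hsupp y hy]

theorem sum_mul_ciSup_le {ι X : Type*} [Fintype ι] [Nonempty X] {a : ι → ℝ} {f : ι → X → ℝ}
    {C : ℝ} (ha : ∀ i, 0 ≤ a i)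
    (h : ∀ w : ι → X, ∑ i, a i * f i (w i) ≤ C) : ∑ i, a i * ⨆ x, f i x ≤ C := by
  refine le_of_forall_pos_le_add fun η hη => ?_
  set A := ∑ i, a i
  have hA : 0 ≤ A := Finset.sum_nonneg fun i _ => ha i
  set δ := η / (A + 1)
  have hδA : δ * A ≤ η := by
    rw [div_mul_eq_mul_div, div_le_iff₀ (by linarith)]
    nlinarith
  choose w hw using fun i => exists_lt_of_lt_ciSup (f := f i)
    (sub_lt_self (⨆ x, f i x) (div_pos hη (by linarith) : 0 < δ))
  calc ∑ i, a i * ⨆ x, f i x = ∑ i, a i * ((⨆ x, f i x) - δ) + δ * A := by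
        rw [Finset.mul_sum, ← Finset.sum_add_distrib]
        exact Finset.sum_congr rfl fun i _ => by ring
    _ ≤ ∑ i, a i * f i (w i) + η := by
        gcongr with i
        · exact ha i
        · exact (hw i).le
    _ ≤ C + η := by linarith [h w]

namespace WassersteinDRO

variable {X : Type*} {n : ℕ} (c : X → X → ℝ) (z : Fin n → X) (ℓ : X → ℝ)

/-- `Γ` couples `(1/n) ∑ δ_{z i}` with a distribution supported on the points `z' j`, at
transport cost at most `t` for the cost function `c`. -/
def feasibleValues (t : ℝ) : Set ℝ :=
  {val | ∃ (m : ℕ) (z' : Fin m → X) (Γ : Fin n → Fin m → ℝ),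
    (∀ i j, 0 ≤ Γ i j) ∧ (∀ i, ∑ j, Γ i j = 1 / (n : ℝ)) ∧
    (∑ i, ∑ j, Γ i j * c (z i) (z' j) ≤ t) ∧
    val = ∑ i, ∑ j, Γ i j * ℓ (z' j)}

noncomputable def worstCaseValue (t : ℝ) : ℝ := sSup (feasibleValues c z ℓ t)

noncomputable def robustSurrogate (lam : ℝ) (x : X) : ℝ := ⨆ w, ℓ w - lam * c x w

noncomputable def dualObjective (t lam : ℝ) : ℝ :=
  lam * t + 1 / (n : ℝ) * ∑ i, robustSurrogate c ℓ lam (z i)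

variable {c z ℓ}

theorem feasibleValues_mono {s t : ℝ} (hst : s ≤ t) :
    feasibleValues c z ℓ s ⊆ feasibleValues c z ℓ t := by
  rintro _ ⟨m, z', Γ, hΓ, hrow, hcost, rfl⟩
  exact ⟨m, z', Γ, hΓ, hrow, hcost.trans hst, rfl⟩

theorem average_mem_feasibleValues (w : Fin n → X) :
    1 / (n : ℝ) * ∑ i, ℓ (w i) ∈ feasibleValues c z ℓ (1 / (n : ℝ) * ∑ i, c (z i) (w i)) := by
  refine ⟨n, w, fun i j => if i = j then 1 / (n : ℝ) else 0, fun i j => ?_, fun i => ?_, ?_, ?_⟩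
  · dsimp only
    split_ifs <;> positivity
  · simp
  · simp [ite_mul, Finset.mul_sum]
  · simp [ite_mul, Finset.mul_sum]

theorem feasibleValues_nonempty (hc : ∀ x, c x x = 0) {t : ℝ} (ht : 0 ≤ t) :
    (feasibleValues c z ℓ t).Nonempty :=
  ⟨_, feasibleValues_mono (by simpa [hc] using ht) (average_mem_feasibleValues z)⟩

theorem bddAbove_feasibleValues (hℓ : BddAbove (range ℓ)) (t : ℝ) :
    BddAbove (feasibleValues c z ℓ t) := by
  obtain ⟨B, hB⟩ := hℓ
  refine ⟨∑ _i : Fin n, 1 / (n : ℝ) * B, ?_⟩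
  rintro _ ⟨m, z', Γ, hΓ, hrow, -, rfl⟩
  calc ∑ i, ∑ j, Γ i j * ℓ (z' j) ≤ ∑ i, ∑ j, Γ i j * B := by
        gcongr with i _ j
        · exact hΓ i j
        · exact hB (mem_range_self _)
    _ = ∑ _i : Fin n, 1 / (n : ℝ) * B := by simp only [← Finset.sum_mul, hrow]

theorem add_mem_feasibleValues {a b s t u v : ℝ} (ha : 0 ≤ a) (hb : 0 ≤ b) (hab : a + b = 1)
    (hu : u ∈ feasibleValues c z ℓ s) (hv : v ∈ feasibleValues c z ℓ t) :
    a * u + b * v ∈ feasibleValues c z ℓ (a * s + b * t) := by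
  obtain ⟨m₁, z₁, Γ₁, hΓ₁, hrow₁, hcost₁, rfl⟩ := hu
  obtain ⟨m₂, z₂, Γ₂, hΓ₂, hrow₂, hcost₂, rfl⟩ := hv
  refine ⟨m₁ + m₂, Fin.append z₁ z₂,
    fun i => Fin.append (fun j => a * Γ₁ i j) (fun j => b * Γ₂ i j), fun i j => ?_, fun i => ?_,
    ?_, ?_⟩
  · refine Fin.addCases (fun j => ?_) (fun j => ?_) j
    · simpa using mul_nonneg ha (hΓ₁ i j)
    · simpa using mul_nonneg hb (hΓ₂ i j)
  · simp only [Fin.sum_univ_add, Fin.append_left, Fin.append_right, ← Finset.mul_sum, hrow₁,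
      hrow₂]
    rw [← add_mul, hab, one_mul]
  · simp only [Fin.sum_univ_add, Fin.append_left, Fin.append_right, Finset.sum_add_distrib,
      mul_assoc, ← Finset.mul_sum]
    gcongr
  · simp only [Fin.sum_univ_add, Fin.append_left, Fin.append_right, Finset.sum_add_distrib,
      mul_assoc, ← Finset.mul_sum]

theorem concaveOn_worstCaseValue (hc : ∀ x, c x x = 0) (hℓ : BddAbove (range ℓ)) :
    ConcaveOn ℝ (Ici 0) (worstCaseValue c z ℓ) := by
  refine ⟨convex_Ici 0, fun s hs t ht a b ha hb hab => ?_⟩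
  have hne := fun {u : ℝ} (hu : u ∈ Ici (0 : ℝ)) =>
    feasibleValues_nonempty (z := z) (ℓ := ℓ) hc hu
  have hbdd := bddAbove_feasibleValues (c := c) (z := z) hℓ
  simp only [worstCaseValue, ← Real.sSup_smul_of_nonneg ha, ← Real.sSup_smul_of_nonneg hb]
  rw [← csSup_add ((hne hs).smul_set) ((hbdd s).smul_of_nonneg ha) ((hne ht).smul_set)
    ((hbdd t).smul_of_nonneg hb)]
  refine csSup_le_csSup (hbdd _) ((hne hs).smul_set.add (hne ht).smul_set) ?_
  rintro _ ⟨_, ⟨u, hu, rfl⟩, _, ⟨v, hv, rfl⟩, rfl⟩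
  exact add_mem_feasibleValues ha hb hab hu hv

theorem monotoneOn_worstCaseValue (hc : ∀ x, c x x = 0) (hℓ : BddAbove (range ℓ)) :
    MonotoneOn (worstCaseValue c z ℓ) (Ici 0) := fun _ hs _ _ hst =>
  csSup_le_csSup (bddAbove_feasibleValues hℓ _) (feasibleValues_nonempty hc hs)
    (feasibleValues_mono hst)

theorem bddAbove_range_sub_mul (hc₀ : ∀ x y, 0 ≤ c x y) (hℓ : BddAbove (range ℓ)) {lam : ℝ}
    (hlam : 0 ≤ lam) (x : X) : BddAbove (range fun w => ℓ w - lam * c x w) := by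
  obtain ⟨B, hB⟩ := hℓ
  refine ⟨B, ?_⟩
  rintro _ ⟨w, rfl⟩
  have := hB (mem_range_self w)
  have := mul_nonneg hlam (hc₀ x w)
  dsimp only
  linarith

theorem le_dualObjective (hc₀ : ∀ x y, 0 ≤ c x y) (hℓ : BddAbove (range ℓ)) {lam t v : ℝ}
    (hlam : 0 ≤ lam) (hv : v ∈ feasibleValues c z ℓ t) : v ≤ dualObjective c z ℓ t lam := by
  obtain ⟨m, z', Γ, hΓ, hrow, hcost, rfl⟩ := hv
  have hpoint : ∀ i j, ℓ (z' j) ≤ robustSurrogate c ℓ lam (z i) + lam * c (z i) (z' j) :=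
    fun i j => sub_le_iff_le_add.1 (le_ciSup (bddAbove_range_sub_mul hc₀ hℓ hlam (z i)) (z' j))
  calc ∑ i, ∑ j, Γ i j * ℓ (z' j)
      ≤ ∑ i, ∑ j, Γ i j * (robustSurrogate c ℓ lam (z i) + lam * c (z i) (z' j)) := by
        gcongr with i _ j
        · exact hΓ i j
        · exact hpoint i j
    _ = ∑ i, 1 / (n : ℝ) * robustSurrogate c ℓ lam (z i)
          + lam * ∑ i, ∑ j, Γ i j * c (z i) (z' j) := by
        simp only [mul_add, Finset.sum_add_distrib, ← Finset.sum_mul, hrow, Finset.mul_sum]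
        congr 1
        exact Finset.sum_congr rfl fun i _ => Finset.sum_congr rfl fun j _ => by ring
    _ ≤ dualObjective c z ℓ t lam := by
        rw [dualObjective, ← Finset.mul_sum]
        linarith [mul_le_mul_of_nonneg_left hcost hlam]

theorem dualObjective_le_worstCaseValue [Nonempty X] (hc₀ : ∀ x y, 0 ≤ c x y)
    (hℓ : BddAbove (range ℓ)) {ε lam : ℝ}
    (hsupp : ∀ t ∈ Ici (0 : ℝ), worstCaseValue c z ℓ t ≤ worstCaseValue c z ℓ ε + lam * (t - ε)) :
    dualObjective c z ℓ ε lam ≤ worstCaseValue c z ℓ ε := by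
  suffices h : ∑ i, 1 / (n : ℝ) * robustSurrogate c ℓ lam (z i)
      ≤ worstCaseValue c z ℓ ε - lam * ε by
    rw [dualObjective, Finset.mul_sum]; linarith
  refine sum_mul_ciSup_le (fun _ => by positivity) fun w => ?_
  set t := 1 / (n : ℝ) * ∑ i, c (z i) (w i)
  have hval : 1 / (n : ℝ) * ∑ i, ℓ (w i) ≤ worstCaseValue c z ℓ t :=
    le_csSup (bddAbove_feasibleValues hℓ t) (average_mem_feasibleValues w)
  have ht : t ∈ Ici (0 : ℝ) := mul_nonneg (by positivity) (Finset.sum_nonneg fun i _ => hc₀ _ _)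
  have hsum : ∑ i, 1 / (n : ℝ) * (ℓ (w i) - lam * c (z i) (w i))
      = 1 / (n : ℝ) * ∑ i, ℓ (w i) - lam * t := by
    simp only [t, mul_sub, Finset.sum_sub_distrib, Finset.mul_sum]
    ring_nf
  rw [hsum]
  linarith [hsupp t ht]

theorem sSup_feasibleValues_eq_sInf_dualObjective [Nonempty X] (hc₀ : ∀ x y, 0 ≤ c x y)
    (hc : ∀ x, c x x = 0) (hℓ : BddAbove (range ℓ)) {ε : ℝ} (hε : 0 < ε) :
    sSup (feasibleValues c z ℓ ε)
      = sInf {v | ∃ lam : ℝ, 0 ≤ lam ∧ v = dualObjective c z ℓ ε lam} := by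
  have hweak : ∀ lam, 0 ≤ lam → worstCaseValue c z ℓ ε ≤ dualObjective c z ℓ ε lam :=
    fun _ hlam => csSup_le (feasibleValues_nonempty hc hε.le) fun _ hv =>
      le_dualObjective hc₀ hℓ hlam hv
  obtain ⟨lam, hlam, hsupp⟩ := (concaveOn_worstCaseValue hc hℓ).exists_nonneg_le_add_mul_sub
    (monotoneOn_worstCaseValue hc hℓ) (by rwa [interior_Ici])
  have hattained := le_antisymm (hweak lam hlam) (dualObjective_le_worstCaseValue hc₀ hℓ hsupp)
  refine (IsLeast.csInf_eq ?_).symm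
  exact ⟨⟨lam, hlam, hattained⟩, fun _ ⟨l, hl, hv⟩ => hv ▸ hweak l hl⟩

end WassersteinDRO

theorem wasserstein_dro_strong_duality_general (d : ℕ) (n : ℕ)
    (z : Fin n → EuclideanSpace ℝ (Fin d))
    (ℓ : EuclideanSpace ℝ (Fin d) → ℝ)
    (M : ℝ) (hbdd : ∀ w, |ℓ w| ≤ M) (ε : ℝ) (hε : 0 < ε) :
    sSup {val : ℝ | ∃ (m : ℕ) (z' : Fin m → EuclideanSpace ℝ (Fin d))
        (Γ : Fin n → Fin m → ℝ),
        (∀ i j, 0 ≤ Γ i j) ∧ (∀ i, ∑ j, Γ i j = 1 / (n : ℝ)) ∧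
        (∑ i, ∑ j, Γ i j * ‖z i - z' j‖ ^ 2 ≤ ε) ∧
        val = ∑ i, ∑ j, Γ i j * ℓ (z' j)}
      = sInf {c : ℝ | ∃ lam : ℝ, 0 ≤ lam ∧
          c = lam * ε + (1 / (n : ℝ))
            * ∑ i, ⨆ w : EuclideanSpace ℝ (Fin d), (ℓ w - lam * ‖z i - w‖ ^ 2)} :=
  WassersteinDRO.sSup_feasibleValues_eq_sInf_dualObjective (c := fun x y => ‖x - y‖ ^ 2)
    (fun _ _ => by positivity) (fun _ => by simp)
    ⟨M, by rintro _ ⟨w, rfl⟩; exact le_of_abs_le (hbdd w)⟩ hε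

/-- Theorem 2 (Lagrangian strong duality for Wasserstein DRO) specialized to an empirical
nominal distribution `(1/n)∑ δ_{zᵢ}` on `ℝ^d` with squared-Euclidean transport cost:
the worst-case expected loss over finitely supported perturbations of transport cost at
most `ε` equals `inf_{λ ≥ 0} { λε + (1/n)∑ᵢ sup_{z'} (ℓ(z') − λ‖zᵢ − z'‖²) }`. -/
theorem wasserstein_dro_strong_duality (d : ℕ) (hd : 1 ≤ d) (n : ℕ) (hn : 1 ≤ n)
    (z : Fin n → EuclideanSpace ℝ (Fin d))
    (ℓ : EuclideanSpace ℝ (Fin d) → ℝ) (hcont : Continuous ℓ)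
    (M : ℝ) (hbdd : ∀ w, |ℓ w| ≤ M) (ε : ℝ) (hε : 0 < ε) :
    sSup {val : ℝ | ∃ (m : ℕ) (z' : Fin m → EuclideanSpace ℝ (Fin d))
        (Γ : Fin n → Fin m → ℝ),
        (∀ i j, 0 ≤ Γ i j) ∧ (∀ i, ∑ j, Γ i j = 1 / (n : ℝ)) ∧
        (∑ i, ∑ j, Γ i j * ‖z i - z' j‖ ^ 2 ≤ ε) ∧
        val = ∑ i, ∑ j, Γ i j * ℓ (z' j)}
      = sInf {c : ℝ | ∃ lam : ℝ, 0 ≤ lam ∧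
          c = lam * ε + (1 / (n : ℝ))
            * ∑ i, ⨆ w : EuclideanSpace ℝ (Fin d), (ℓ w - lam * ‖z i - w‖ ^ 2)} :=
  wasserstein_dro_strong_duality_general d n z ℓ M hbdd ε hε
end
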